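/- Let A be a d × d real matrix with |det A| ≥ δ > 0, and let Δ be a d × d real matrix with d · ‖Δ‖ · (‖A‖ + ‖Δ‖)^{d−1} < δ. Then det(A + Δ) has the same sign as det(A): sign(det(A + Δ)) = sign(det A). -/

import Mathlib

/-!
Writing `det T` as the determinant form of an orthonormal basis `b` evaluated on `T ∘ b`, the
perturbation bound is the mean value estimate for multilinear maps, with the constant `1`
supplied by Hadamard's inequality. A real number within `|y|` of `y` has the sign of `y`.
-/

open Module

theorem Real.sign_eq_sign_of_abs_sub_lt {x y : ℝ} (h : |x - y| < |y|) :
    Real.sign x = Real.sign y := by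
  rcases lt_trichotomy y 0 with hy | hy | hy
  · rw [abs_of_neg hy] at h
    rw [Real.sign_of_neg hy, Real.sign_of_neg (by linarith [le_abs_self (x - y)])]
  · rw [hy, abs_zero] at h
    exact absurd h (abs_nonneg _).not_gt
  · rw [abs_of_pos hy] at h
    rw [Real.sign_of_pos hy, Real.sign_of_pos (by linarith [neg_abs_le (x - y)])]

variable {E : Type*} [NormedAddCommGroup E] [InnerProductSpace ℝ E]

theorem OrthonormalBasis.abs_det_le_prod_norm {n : ℕ} (b : OrthonormalBasis (Fin n) ℝ E)
    (v : Fin n → E) : |b.toBasis.det v| ≤ ∏ i, ‖v i‖ := by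
  have : Fact (finrank ℝ E = n) := ⟨by simpa using finrank_eq_card_basis b.toBasis⟩
  rw [← b.toBasis.orientation.volumeForm_robust' b v]
  exact b.toBasis.orientation.abs_volumeForm_apply_le v

theorem ContinuousLinearMap.norm_comp_orthonormalBasis_le {ι : Type*} [Fintype ι]
    (T : E →L[ℝ] E) (b : OrthonormalBasis ι ℝ E) : ‖⇑T ∘ b‖ ≤ ‖T‖ :=
  (pi_norm_le_iff_of_nonneg (norm_nonneg T)).2 fun i =>
    T.le_opNorm_of_le (b.orthonormal.1 i).le |>.trans_eq (mul_one _)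

theorem LinearMap.abs_det_add_sub_det_le [FiniteDimensional ℝ E] (A Δ : E →L[ℝ] E) :
    |LinearMap.det (A + Δ).toLinearMap - LinearMap.det A.toLinearMap| ≤
      finrank ℝ E * ‖Δ‖ * (‖A‖ + ‖Δ‖) ^ (finrank ℝ E - 1) := by
  set b := stdOrthonormalBasis ℝ E
  have det_eq (T : E →L[ℝ] E) : b.toBasis.det (⇑T ∘ b) = LinearMap.det T.toLinearMap := by
    rw [← T.coe_coe, ← b.coe_toBasis, Basis.det_comp, Basis.det_self, mul_one]
  have mean_value := b.toBasis.det.norm_image_sub_le_of_bound zero_le_one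
    (fun v => (one_mul (∏ i, ‖v i‖)).symm ▸ b.abs_det_le_prod_norm v) (⇑(A + Δ) ∘ b) (⇑A ∘ b)
  have hmax : max ‖⇑(A + Δ) ∘ b‖ ‖⇑A ∘ b‖ ≤ ‖A‖ + ‖Δ‖ :=
    max_le (((A + Δ).norm_comp_orthonormalBasis_le b).trans (norm_add_le A Δ))
      ((A.norm_comp_orthonormalBasis_le b).trans (le_add_of_nonneg_right (norm_nonneg Δ)))
  have hdiff : ⇑(A + Δ) ∘ b - ⇑A ∘ b = ⇑Δ ∘ b := by
    ext1 i
    simp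
  rw [det_eq, det_eq, hdiff, one_mul, Fintype.card_fin, Real.norm_eq_abs] at mean_value
  refine mean_value.trans ?_
  rw [mul_right_comm]
  gcongr
  exact Δ.norm_comp_orthonormalBasis_le b

theorem stmt7_general {d : ℕ}
    (A Δ : EuclideanSpace ℝ (Fin d) →L[ℝ] EuclideanSpace ℝ (Fin d))
    (δ : ℝ)
    (hA : δ ≤ |LinearMap.det A.toLinearMap|)
    (hΔ : d * ‖Δ‖ * (‖A‖ + ‖Δ‖) ^ (d - 1) < δ) :
    Real.sign (LinearMap.det ((A + Δ).toLinearMap)) =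
      Real.sign (LinearMap.det A.toLinearMap) := by
  apply Real.sign_eq_sign_of_abs_sub_lt
  calc _ ≤ d * ‖Δ‖ * (‖A‖ + ‖Δ‖) ^ (d - 1) := by
        simpa only [finrank_euclideanSpace_fin] using LinearMap.abs_det_add_sub_det_le A Δ
    _ < δ := hΔ
    _ ≤ _ := hA

/-- Sign stability of the determinant. If `|det A| ≥ δ > 0` and the
perturbation `Δ` satisfies `d · ‖Δ‖ · (‖A‖ + ‖Δ‖)^(d−1) < δ`, then `det(A + Δ)` has the
same sign as `det A`. -/
theorem stmt7 {d : ℕ}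
    (A Δ : EuclideanSpace ℝ (Fin d) →L[ℝ] EuclideanSpace ℝ (Fin d))
    (δ : ℝ) (hδ : 0 < δ)
    (hA : δ ≤ |LinearMap.det A.toLinearMap|)
    (hΔ : d * ‖Δ‖ * (‖A‖ + ‖Δ‖) ^ (d - 1) < δ) :
    Real.sign (LinearMap.det ((A + Δ).toLinearMap)) =
      Real.sign (LinearMap.det A.toLinearMap) :=
  stmt7_general A Δ δ hA hΔ
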